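/- Let K ≥ 2, N ≥ 1, and let x : {1,…,N} → {1,…,K} have every category nonempty. Fix k ∈ {1,…,K} and let x' : {1,…,N+1} → {1,…,K} extend x with x'(N+1) = k. Let u' = (u'_1,…,u'_{N+1}) ∈ Δ^{N+1} have all coordinates strictly positive, and suppose u := (u'_1,…,u'_N) ∈ R_x. With edge weights log η_{j→ℓ}(u) computed from u, let m(ℓ) = min(ℓ→k) over simple walks from ℓ to k, and define θ* ∈ Δ by θ*_ℓ = exp(−m(ℓ)) / Σ_{ℓ'} exp(−m(ℓ')). Then u' ∈ R_{x'} if and only if u'_{N+1} ∈ Δ_k(θ*). -/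
import Mathlib

noncomputable section

/-- The `ℓ`-th vertex of the probability simplex in `ℝ^K` (standard basis vector). -/
def vtx (K : ℕ) (ℓ : Fin K) : Fin K → ℝ := fun i => if i = ℓ then 1 else 0

/-- The subsimplex `Δ_k(θ)`: convex hull of `{θ} ∪ {V_ℓ : ℓ ≠ k}`. -/
def subsimplex (K : ℕ) (k : Fin K) (θ : Fin K → ℝ) : Set (Fin K → ℝ) :=
  convexHull ℝ (insert θ {z | ∃ ℓ : Fin K, ℓ ≠ k ∧ z = vtx K ℓ})

/-- The weight of the walk `j 0, j 1, …, j m` for edge weights `w`. -/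
def walkWeight (K : ℕ) (w : Fin K → Fin K → ℝ) (m : ℕ) (j : Fin (m + 1) → Fin K) : ℝ :=
  ∑ i : Fin m, w (j i.castSucc) (j i.succ)

/-- The minimum weight over simple walks (pairwise distinct vertices) from `a` to `b`. -/
def minWalk (K : ℕ) (w : Fin K → Fin K → ℝ) (a b : Fin K) : ℝ :=
  sInf {v : ℝ | ∃ (m : ℕ) (j : Fin (m + 1) → Fin K),
    j 0 = a ∧ j (Fin.last m) = b ∧ Function.Injective j ∧ v = walkWeight K w m j}

namespace Aux18

lemma of_mem_subsimplex {K : ℕ} {k : Fin K} {θ z : Fin K → ℝ}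
    (hθ : θ ∈ stdSimplex ℝ (Fin K)) (hz : z ∈ subsimplex K k θ) (ℓ : Fin K) :
    θ ℓ * z k ≤ θ k * z ℓ := by
  have hconv : Convex ℝ {v : Fin K → ℝ | θ ℓ * v k ≤ θ k * v ℓ} := by
    intro v1 h1 v2 h2 a b ha hb hab
    simp only [Set.mem_setOf_eq] at *
    simp only [Pi.add_apply, Pi.smul_apply, smul_eq_mul]
    nlinarith [mul_le_mul_of_nonneg_left h1 ha, mul_le_mul_of_nonneg_left h2 hb]
  have hsub : insert θ {z | ∃ ℓ' : Fin K, ℓ' ≠ k ∧ z = vtx K ℓ'} ⊆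
      {v : Fin K → ℝ | θ ℓ * v k ≤ θ k * v ℓ} := by
    rintro v (rfl | ⟨ℓ', hℓ', rfl⟩)
    · simp only [Set.mem_setOf_eq]; ring_nf; exact le_refl _
    · simp only [Set.mem_setOf_eq, vtx]
      rw [if_neg (Ne.symm hℓ'), mul_zero]
      exact mul_nonneg (hθ.1 k) (by split <;> norm_num)
  exact convexHull_min hsub hconv hz

lemma mem_subsimplex_of {K : ℕ} {k : Fin K} {θ z : Fin K → ℝ}
    (hθ : θ ∈ stdSimplex ℝ (Fin K)) (hz : z ∈ stdSimplex ℝ (Fin K)) (hzk : 0 < z k)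
    (h : ∀ ℓ, θ ℓ * z k ≤ θ k * z ℓ) : z ∈ subsimplex K k θ := by
  have hθk : 0 < θ k := by
    by_contra hc
    push_neg at hc
    have h1 : ∀ ℓ, θ ℓ * z k ≤ 0 := fun ℓ =>
      (h ℓ).trans (mul_nonpos_of_nonpos_of_nonneg hc (hz.1 ℓ))
    have h2 : (∑ ℓ : Fin K, θ ℓ * z k) ≤ 0 := Finset.sum_nonpos fun ℓ _ => h1 ℓ
    rw [← Finset.sum_mul, hθ.2, one_mul] at h2
    linarith
  set t : ℝ := z k / θ k with ht
  have htθ : t * θ k = z k := div_mul_cancel₀ _ (ne_of_gt hθk)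
  have htpos : 0 < t := div_pos hzk hθk
  set c : Fin K → ℝ := fun ℓ => (z ℓ - t * θ ℓ) + (if ℓ = k then t else 0) with hc
  set p : Fin K → (Fin K → ℝ) := fun ℓ => if ℓ = k then θ else vtx K ℓ with hp
  have hck : c k = t := by simp [hc, htθ]
  have hcnn : ∀ ℓ, 0 ≤ c ℓ := by
    intro ℓ
    by_cases hℓ : ℓ = k
    · subst hℓ; rw [hck]; linarith
    · simp only [hc, if_neg hℓ, add_zero, sub_nonneg]
      rw [ht, div_mul_eq_mul_div, div_le_iff₀ hθk]
      nlinarith [h ℓ]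
  have hcsum : ∑ ℓ, c ℓ = 1 := by
    simp only [hc]
    rw [Finset.sum_add_distrib, Finset.sum_sub_distrib, ← Finset.mul_sum, hz.2, hθ.2,
      Finset.sum_ite_eq' Finset.univ k fun _ => t]
    simp
  have hzeq : z = ∑ ℓ, c ℓ • p ℓ := by
    funext i
    have h1 : (∑ ℓ, c ℓ • p ℓ) i = ∑ ℓ, c ℓ * p ℓ i := by
      rw [Finset.sum_apply]; simp
    rw [h1, ← Finset.add_sum_erase Finset.univ _ (Finset.mem_univ k)]
    have h2 : ∀ ℓ ∈ Finset.univ.erase k, c ℓ * p ℓ i = if ℓ = i then c ℓ else 0 := by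
      intro ℓ hℓ
      have hℓk : ℓ ≠ k := Finset.ne_of_mem_erase hℓ
      simp only [hp, if_neg hℓk, vtx]
      by_cases hi : i = ℓ
      · simp [hi]
      · simp [hi, Ne.symm hi]
    rw [Finset.sum_congr rfl h2, Finset.sum_ite_eq' (Finset.univ.erase k) i c]
    simp only [hp, if_pos rfl, hck, Finset.mem_erase, Finset.mem_univ, and_true]
    by_cases hi : i = k
    · subst hi; simp [htθ]
    · rw [if_pos hi]; simp [hc, if_neg hi]
  rw [subsimplex, hzeq]
  apply Convex.sum_mem (convex_convexHull ℝ _) (fun ℓ _ => hcnn ℓ) hcsum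
  intro ℓ _
  apply subset_convexHull
  by_cases hℓ : ℓ = k
  · simp [hp, hℓ]
  · simp only [hp, if_neg hℓ]
    exact Set.mem_insert_of_mem _ ⟨ℓ, hℓ, rfl⟩

def wset (K : ℕ) (w : Fin K → Fin K → ℝ) (a b : Fin K) : Set ℝ :=
  {v : ℝ | ∃ (m : ℕ) (j : Fin (m + 1) → Fin K),
    j 0 = a ∧ j (Fin.last m) = b ∧ Function.Injective j ∧ v = walkWeight K w m j}

lemma minWalk_eq (K : ℕ) (w : Fin K → Fin K → ℝ) (a b : Fin K) :
    minWalk K w a b = sInf (wset K w a b) := rfl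

def ext {K m : ℕ} (j : Fin (m + 1) → Fin K) : ℕ → Fin K :=
  fun t => j ⟨min t m, Nat.lt_succ_of_le (Nat.min_le_right t m)⟩

lemma ext_eq {K m : ℕ} (j : Fin (m + 1) → Fin K) (i : Fin (m + 1)) :
    ext j i.val = j i := by
  unfold ext
  congr 1
  exact Fin.ext (by simp [Nat.min_eq_left (Nat.le_of_lt_succ i.isLt)])

lemma ext_zero {K m : ℕ} (j : Fin (m + 1) → Fin K) : ext j 0 = j 0 := ext_eq j 0

lemma ext_last {K m : ℕ} (j : Fin (m + 1) → Fin K) : ext j m = j (Fin.last m) :=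
  ext_eq j (Fin.last m)

lemma walkWeight_eq_sum {K : ℕ} (w : Fin K → Fin K → ℝ) (m : ℕ) (j : Fin (m + 1) → Fin K) :
    walkWeight K w m j = ∑ t ∈ Finset.range m, w (ext j t) (ext j (t + 1)) := by
  unfold walkWeight
  rw [← Fin.sum_univ_eq_sum_range (fun t => w (ext j t) (ext j (t + 1))) m]
  apply Finset.sum_congr rfl
  intro i _
  have h1 : ext j i.val = j i.castSucc := by rw [← ext_eq j i.castSucc]; rfl
  have h2 : ext j (i.val + 1) = j i.succ := by rw [← ext_eq j i.succ]; rfl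
  rw [h1, h2]

lemma natChain {K : ℕ} (w : Fin K → Fin K → ℝ) (θ0 : Fin K → ℝ)
    (hedge : ∀ a b, Real.log (θ0 b) ≤ w a b + Real.log (θ0 a)) (g : ℕ → Fin K) :
    ∀ a b, a ≤ b →
      Real.log (θ0 (g b)) ≤ (∑ t ∈ Finset.Ico a b, w (g t) (g (t + 1))) + Real.log (θ0 (g a)) := by
  intro a b hab
  induction b, hab using Nat.le_induction with
  | base => simp
  | succ b hab ih =>
    rw [← Finset.sum_Ico_consecutive _ hab (Nat.le_succ b),
      Finset.sum_Ico_succ_top (le_refl b)]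
    have := hedge (g b) (g (b + 1))
    simp at *
    linarith

lemma wset_lb {K : ℕ} (w : Fin K → Fin K → ℝ) (θ0 : Fin K → ℝ)
    (hedge : ∀ a b, Real.log (θ0 b) ≤ w a b + Real.log (θ0 a)) (a b : Fin K)
    (v : ℝ) (hv : v ∈ wset K w a b) : Real.log (θ0 b) - Real.log (θ0 a) ≤ v := by
  obtain ⟨m, j, hj0, hjl, -, rfl⟩ := hv
  have := natChain w θ0 hedge (ext j) 0 m (Nat.zero_le m)
  rw [ext_zero, ext_last, hj0, hjl, ← Finset.range_eq_Ico, ← walkWeight_eq_sum] at this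
  linarith

lemma wset_finite {K : ℕ} (w : Fin K → Fin K → ℝ) (a b : Fin K) :
    (wset K w a b).Finite := by
  have hK : 0 < K := a.pos
  apply Set.Finite.subset (Set.finite_range
    (fun p : (m : Fin K) × (Fin (m.val + 1) → Fin K) => walkWeight K w p.1.val p.2))
  rintro v ⟨m, j, -, -, hinj, rfl⟩
  have hm : m < K := by
    have := Fintype.card_le_of_injective j hinj
    simpa using this
  exact ⟨⟨⟨m, hm⟩, j⟩, rfl⟩

lemma wset_nonempty {K : ℕ} (w : Fin K → Fin K → ℝ) (a b : Fin K) :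
    (wset K w a b).Nonempty := by
  by_cases hab : a = b
  · subst hab
    exact ⟨0, 0, fun _ => a, rfl, rfl, fun p q _ => Fin.ext (by omega), rfl⟩
  · refine ⟨_, 1, fun i => if i = 0 then a else b, if_pos rfl, rfl, ?_, rfl⟩
    intro p q hpq
    fin_cases p <;> fin_cases q <;> simp_all

lemma minWalk_mem {K : ℕ} (w : Fin K → Fin K → ℝ) (a b : Fin K) :
    minWalk K w a b ∈ wset K w a b :=
  (wset_nonempty w a b).csInf_mem (wset_finite w a b)

lemma minWalk_self {K : ℕ} (w : Fin K → Fin K → ℝ) (k : Fin K) :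
    minWalk K w k k = 0 := by
  have h : wset K w k k = {0} := by
    apply Set.eq_singleton_iff_unique_mem.2
    constructor
    · exact ⟨0, fun _ => k, rfl, rfl, fun p q _ => Fin.ext (by omega), by
        simp [walkWeight]⟩
    · rintro v ⟨mm, j, hj0, hjl, hinj, rfl⟩
      have hmm : mm = 0 := by
        by_contra hne
        have h1 : (0 : Fin (mm + 1)) = Fin.last mm := hinj (hj0.trans hjl.symm)
        have h2 := congrArg Fin.val h1
        simp [Fin.last] at h2
        omega
      subst hmm
      simp [walkWeight]
  rw [minWalk_eq, h, csInf_singleton]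

lemma minWalk_lb {K : ℕ} (w : Fin K → Fin K → ℝ) (θ0 : Fin K → ℝ)
    (hedge : ∀ a b, Real.log (θ0 b) ≤ w a b + Real.log (θ0 a)) (a b : Fin K) :
    Real.log (θ0 b) - Real.log (θ0 a) ≤ minWalk K w a b :=
  le_csInf (wset_nonempty w a b) (fun v hv => wset_lb w θ0 hedge a b v hv)

lemma minWalk_triangle {K : ℕ} (w : Fin K → Fin K → ℝ) (θ0 : Fin K → ℝ)
    (hedge : ∀ a b, Real.log (θ0 b) ≤ w a b + Real.log (θ0 a)) (a ℓ k : Fin K) :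
    minWalk K w a k ≤ w a ℓ + minWalk K w ℓ k := by
  obtain ⟨mm, j, hj0, hjl, hinj, hW⟩ := minWalk_mem w ℓ k
  set F : ℕ → ℝ := fun t => w (ext j t) (ext j (t + 1)) with hF
  by_cases hray : ∃ i : Fin (mm + 1), j i = a
  · obtain ⟨i, hi⟩ := hray
    set m' := mm - i.val with hm'
    have him : i.val ≤ mm := Nat.le_of_lt_succ i.isLt
    set js : Fin (m' + 1) → Fin K :=
      fun t => j ⟨i.val + t.val, by have := t.isLt; omega⟩ with hjs
    have hjs0 : js 0 = a := by
      rw [hjs]; simp only []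
      rw [show (⟨i.val + (0 : Fin (m'+1)).val, by omega⟩ : Fin (mm+1)) = i from Fin.ext (by simp)]
      exact hi
    have hjsl : js (Fin.last m') = k := by
      rw [hjs]; simp only []
      rw [show (⟨i.val + (Fin.last m').val, by have := (Fin.last m').isLt; omega⟩ : Fin (mm+1))
          = Fin.last mm from Fin.ext (by simp [Fin.last]; omega)]
      exact hjl
    have hjsinj : Function.Injective js := by
      intro p q hpq
      have h1 := hinj hpq
      have h2 := congrArg Fin.val h1
      simp at h2
      exact Fin.ext (by omega)
    have hmem : walkWeight K w m' js ∈ wset K w a k := ⟨m', js, hjs0, hjsl, hjsinj, rfl⟩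
    have hle : minWalk K w a k ≤ walkWeight K w m' js :=
      csInf_le (wset_finite w a k).bddBelow hmem
    have hsw : walkWeight K w m' js = ∑ t ∈ Finset.Ico i.val mm, F t := by
      rw [walkWeight_eq_sum, Finset.sum_Ico_eq_sum_range]
      apply Finset.sum_congr rfl
      intro t ht
      simp only [Finset.mem_range] at ht
      have h1 : ext js t = ext j (i.val + t) := by
        unfold ext
        rw [hjs]; simp only []
        congr 1
        exact Fin.ext (by simp <;> omega)
      have h2 : ext js (t + 1) = ext j (i.val + t + 1) := by
        unfold ext
        rw [hjs]; simp only []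
        congr 1
        exact Fin.ext (by simp <;> omega)
      rw [h1, h2, hF]
    have hsplit : walkWeight K w mm j
        = (∑ t ∈ Finset.Ico 0 i.val, F t) + ∑ t ∈ Finset.Ico i.val mm, F t := by
      rw [walkWeight_eq_sum, Finset.range_eq_Ico,
        Finset.sum_Ico_consecutive _ (Nat.zero_le i.val) him]
    have hpre : Real.log (θ0 a) - Real.log (θ0 ℓ) ≤ ∑ t ∈ Finset.Ico 0 i.val, F t := by
      have hnc := natChain w θ0 hedge (ext j) 0 i.val (Nat.zero_le _)
      rw [ext_zero, hj0, ext_eq j i, hi] at hnc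
      linarith
    have hwa := hedge a ℓ
    rw [← hW] at hsplit
    linarith [hsplit, hsw, hle]
  · push_neg at hray
    set j2 : Fin (mm + 1 + 1) → Fin K := Fin.cons a j with hj2
    have hj20 : j2 0 = a := rfl
    have hj2l : j2 (Fin.last (mm + 1)) = k := by
      rw [hj2, ← Fin.succ_last, Fin.cons_succ]; exact hjl
    have hj2inj : Function.Injective j2 := by
      rw [hj2]
      apply Fin.cons_injective_of_injective _ hinj
      rintro ⟨i, rfl⟩
      exact (hray i) rfl
    have hwt : walkWeight K w (mm + 1) j2 = w a ℓ + walkWeight K w mm j := by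
      unfold walkWeight
      rw [Fin.sum_univ_succ]
      congr 1
      simp [hj2, hj0]
    have hmem : walkWeight K w (mm + 1) j2 ∈ wset K w a k :=
      ⟨mm + 1, j2, hj20, hj2l, hj2inj, rfl⟩
    have hle : minWalk K w a k ≤ walkWeight K w (mm + 1) j2 :=
      csInf_le (wset_finite w a k).bddBelow hmem
    rw [hwt, ← hW] at hle
    exact hle

end Aux18

open Aux18 in
theorem stmt18 (K N : ℕ) (hK : 2 ≤ K) (hN : 1 ≤ N)
    (x : Fin N → Fin K) (hx : ∀ k, ∃ n, x n = k)
    (k : Fin K) (x' : Fin (N + 1) → Fin K)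
    (hx' : x' = Fin.snoc x k)
    (u' : Fin (N + 1) → Fin K → ℝ)
    (hu' : ∀ n, u' n ∈ stdSimplex ℝ (Fin K))
    (hu'pos : ∀ n ℓ, 0 < u' n ℓ)
    (u : Fin N → Fin K → ℝ) (hu : ∀ n : Fin N, u n = u' n.castSucc)
    (hR : ∃ θ ∈ stdSimplex ℝ (Fin K), ∀ n, u n ∈ subsimplex K (x n) θ)
    (η : Fin K → Fin K → ℝ)
    (hη : ∀ j ℓ, IsLeast {v : ℝ | ∃ n, x n = j ∧ v = u n ℓ / u n j} (η j ℓ))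
    (m : Fin K → ℝ)
    (hm : ∀ ℓ, m ℓ = minWalk K (fun a b => Real.log (η a b)) ℓ k)
    (θstar : Fin K → ℝ)
    (hθstar : ∀ ℓ, θstar ℓ = Real.exp (-(m ℓ)) / ∑ ℓ' : Fin K, Real.exp (-(m ℓ'))) :
    (∃ θ ∈ stdSimplex ℝ (Fin K), ∀ n, u' n ∈ subsimplex K (x' n) θ) ↔
      u' (Fin.last N) ∈ subsimplex K k θstar := by
  have husimp : ∀ n, u n ∈ stdSimplex ℝ (Fin K) := fun n => (hu n) ▸ hu' n.castSucc
  have hupos : ∀ n ℓ, 0 < u n ℓ := fun n ℓ => by rw [hu n]; exact hu'pos n.castSucc ℓ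
  have hηpos : ∀ a b, 0 < η a b := by
    intro a b
    obtain ⟨n, hn, he⟩ := (hη a b).1
    rw [he]; exact div_pos (hupos n b) (hupos n a)
  set w : Fin K → Fin K → ℝ := fun a b => Real.log (η a b) with hw
  have hPiff : ∀ θ, θ ∈ stdSimplex ℝ (Fin K) →
      ((∀ n, u n ∈ subsimplex K (x n) θ) ↔ ∀ a b, θ b ≤ η a b * θ a) := by
    intro θ hθ
    constructor
    · intro hmem a b
      obtain ⟨n, hn, he⟩ := (hη a b).1
      have h1 := of_mem_subsimplex hθ (hmem n) b
      rw [he, ← hn]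
      rw [div_mul_eq_mul_div, le_div_iff₀ (hupos n (x n))]
      nlinarith [h1]
    · intro hP n
      apply mem_subsimplex_of hθ (husimp n) (hupos n (x n))
      intro ℓ
      have h1 : θ ℓ ≤ η (x n) ℓ * θ (x n) := hP (x n) ℓ
      have h2 : η (x n) ℓ ≤ u n ℓ / u n (x n) := (hη (x n) ℓ).2 ⟨n, rfl, rfl⟩
      have h3 : u n ℓ / u n (x n) * u n (x n) = u n ℓ :=
        div_mul_cancel₀ _ (ne_of_gt (hupos n (x n)))
      nlinarith [hupos n (x n), hθ.1 (x n),
        mul_le_mul_of_nonneg_right h1 (le_of_lt (hupos n (x n))),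
        mul_le_mul_of_nonneg_right h2 (mul_nonneg (hθ.1 (x n)) (le_of_lt (hupos n (x n))))]
  have hPpos : ∀ θ, θ ∈ stdSimplex ℝ (Fin K) → (∀ a b, θ b ≤ η a b * θ a) →
      ∀ ℓ, 0 < θ ℓ := by
    intro θ hθ hP ℓ
    obtain ⟨i, hi⟩ : ∃ i, 0 < θ i := by
      by_contra hc; push_neg at hc
      have h1 : (∑ i, θ i) ≤ 0 := Finset.sum_nonpos (fun i _ => hc i)
      rw [hθ.2] at h1; linarith
    have h2 := hP ℓ i
    nlinarith [hηpos ℓ i, hθ.1 ℓ]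
  have hedge : ∀ θ : Fin K → ℝ, (∀ ℓ, 0 < θ ℓ) → (∀ a b, θ b ≤ η a b * θ a) →
      ∀ a b, Real.log (θ b) ≤ w a b + Real.log (θ a) := by
    intro θ hpos hP a b
    have h1 : Real.log (θ b) ≤ Real.log (η a b * θ a) := Real.log_le_log (hpos b) (hP a b)
    rw [Real.log_mul (ne_of_gt (hηpos a b)) (ne_of_gt (hpos a))] at h1
    exact h1
  obtain ⟨θ0, hθ0Δ, hθ0mem⟩ := hR
  have hP0 : ∀ a b, θ0 b ≤ η a b * θ0 a := (hPiff θ0 hθ0Δ).1 hθ0mem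
  have hθ0pos := hPpos θ0 hθ0Δ hP0
  have hedge0 := hedge θ0 hθ0pos hP0
  have hmk : m k = 0 := by rw [hm k]; exact minWalk_self w k
  set S := ∑ ℓ' : Fin K, Real.exp (-(m ℓ')) with hS
  have hSpos : 0 < S :=
    Finset.sum_pos (fun ℓ _ => Real.exp_pos _) ⟨k, Finset.mem_univ k⟩
  have hθstarΔ : θstar ∈ stdSimplex ℝ (Fin K) := by
    constructor
    · intro ℓ; rw [hθstar ℓ]; positivity
    · have : (∑ ℓ, θstar ℓ) = (∑ ℓ, Real.exp (-(m ℓ))) / S := by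
        rw [Finset.sum_div]
        exact Finset.sum_congr rfl fun ℓ _ => hθstar ℓ
      rw [this, ← hS, div_self (ne_of_gt hSpos)]
  have hPstar : ∀ a b, θstar b ≤ η a b * θstar a := by
    intro a b
    have htri := minWalk_triangle w θ0 hedge0 a b k
    rw [← hm a, ← hm b] at htri
    have h1 : Real.exp (-(m b)) ≤ η a b * Real.exp (-(m a)) := by
      calc Real.exp (-(m b)) ≤ Real.exp (w a b + -(m a)) := Real.exp_le_exp.2 (by linarith)
        _ = Real.exp (w a b) * Real.exp (-(m a)) := Real.exp_add _ _
        _ = η a b * Real.exp (-(m a)) := by rw [hw]; rw [Real.exp_log (hηpos a b)]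
    rw [hθstar a, hθstar b, ← mul_div_assoc, div_le_div_iff₀ hSpos hSpos]
    nlinarith [hSpos, h1]
  constructor
  · rintro ⟨θ, hθΔ, hθmem⟩
    have hmemN : ∀ n : Fin N, u n ∈ subsimplex K (x n) θ := by
      intro n
      have h1 := hθmem n.castSucc
      rw [hx', Fin.snoc_castSucc] at h1
      rw [hu n]; exact h1
    have hPθ := (hPiff θ hθΔ).1 hmemN
    have hθpos := hPpos θ hθΔ hPθ
    have hlast := hθmem (Fin.last N)
    rw [hx', Fin.snoc_last] at hlast
    have hineq := fun ℓ => of_mem_subsimplex hθΔ hlast ℓ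
    apply mem_subsimplex_of hθstarΔ (hu' _) (hu'pos _ k)
    intro ℓ
    have hlb := minWalk_lb w θ (hedge θ hθpos hPθ) ℓ k
    rw [← hm ℓ] at hlb
    have hexp : Real.exp (-(m ℓ)) * θ k ≤ θ ℓ := by
      have h2 : Real.exp (-(m ℓ)) ≤ Real.exp (Real.log (θ ℓ) - Real.log (θ k)) :=
        Real.exp_le_exp.2 (by linarith)
      rw [Real.exp_sub, Real.exp_log (hθpos ℓ), Real.exp_log (hθpos k)] at h2
      rw [← le_div_iff₀ (hθpos k)]
      exact h2
    rw [hθstar ℓ, hθstar k, hmk]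
    rw [neg_zero, Real.exp_zero]
    rw [div_mul_eq_mul_div, div_mul_eq_mul_div, div_le_div_iff₀ hSpos hSpos]
    have h3 := hineq ℓ
    nlinarith [hSpos, hu'pos (Fin.last N) k, hu'pos (Fin.last N) ℓ, hθpos k,
      mul_le_mul_of_nonneg_right hexp (le_of_lt (hu'pos (Fin.last N) k))]
  · intro hlast
    refine ⟨θstar, hθstarΔ, ?_⟩
    intro n
    rw [hx']
    refine Fin.lastCases ?_ ?_ n
    · rw [Fin.snoc_last]; exact hlast
    · intro i
      rw [Fin.snoc_castSucc]
      have h1 := (hPiff θstar hθstarΔ).2 hPstar i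
      rw [hu i] at h1; exact h1
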